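/- Let k be a field and p ∈ k with p ≠ 0 and p² ≠ 1. In the polynomial ring S = k[X, Y], the ideal J generated by X³Y − pX⁵ and Y² − X⁴ contains X⁷, and the homogeneous ideal (X³Y, Y², X⁷) defines a quotient S/(X³Y, Y², X⁷) with Hilbert function 1, 2, 2, 2, 1, 1, 1, 0, 0, …. -/

import Mathlib

/-!
Membership of `X⁷` is an explicit combination:
`(1 - p²) X⁷ = (p X² + Y)(X³Y - p X⁵) - X³(Y² - X⁴)`, and `1 - p²` is a unit.
The degree-`n` part of a monomial ideal is spanned by the degree-`n` monomials it contains,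
so the Hilbert function counts the degree-`n` monomials divisible by no generator; for
`(X³Y, Y², X⁷)` these are the `XᵃYᵇ` with `b ≤ 1`, `a < 7`, and `a < 3` if `b = 1`.
-/

open MvPolynomial

/-- The Hilbert function of `k[X,Y]/K` in degree `n`: `dim_k S_n − dim_k K_n`. -/
noncomputable def hilbFn (k : Type*) [Field k] (K : Ideal (MvPolynomial (Fin 2) k)) (n : ℕ) : ℕ :=
  Module.finrank k (homogeneousSubmodule (Fin 2) k n) -
    Module.finrank k
      (Submodule.restrictScalars k K ⊓ homogeneousSubmodule (Fin 2) k n : Submodule k _)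

open Finset

theorem pow_seven_mem_span_pair {R : Type*} [CommRing R] {x y c : R} (hc : IsUnit (1 - c ^ 2)) :
    x ^ 7 ∈ Ideal.span {x ^ 3 * y - c * x ^ 5, y ^ 2 - x ^ 4} := by
  rw [← Ideal.unit_mul_mem_iff_mem _ hc, Ideal.mem_span_pair]
  exact ⟨c * x ^ 2 + y, -x ^ 3, by ring⟩

namespace MvPolynomial

theorem restrictScalars_span_monomial_inf_homogeneousSubmodule {σ R : Type*} [CommSemiring R]
    (s : Set (σ →₀ ℕ)) (n : ℕ) :
    (Ideal.span ((monomial · (1 : R)) '' s)).restrictScalars R ⊓ homogeneousSubmodule σ R n =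
      restrictSupport R {d | d.degree = n ∧ ∃ e ∈ s, e ≤ d} := by
  ext x
  rw [Submodule.mem_inf, Submodule.restrictScalars_mem, mem_ideal_span_monomial_image,
    homogeneousSubmodule_eq_finsupp_supported]
  simp only [AddMonoidAlgebra.mem_supported, mem_restrictSupport_iff, Set.subset_def]
  exact ⟨fun ⟨hs, hd⟩ d hx => ⟨hd d hx, hs d hx⟩,
    fun h => ⟨fun d hx => (h d hx).2, fun d hx => (h d hx).1⟩⟩

theorem finrank_restrictSupport {σ k : Type*} [Field k] (s : Set (σ →₀ ℕ)) :
    Module.finrank k (restrictSupport k s) = s.ncard :=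
  Module.finrank_eq_nat_card_basis (basisRestrictSupport k s)

end MvPolynomial

theorem hilbFn_span_monomial (k : Type*) [Field k] (s : Set (Fin 2 →₀ ℕ)) (n : ℕ) :
    hilbFn k (Ideal.span ((monomial · 1) '' s)) n =
      {d : Fin 2 →₀ ℕ | d.degree = n ∧ ∀ e ∈ s, ¬e ≤ d}.ncard := by
  rw [hilbFn, restrictScalars_span_monomial_inf_homogeneousSubmodule,
    homogeneousSubmodule_eq_finsupp_supported, ← restrictSupport, finrank_restrictSupport,
    finrank_restrictSupport, ← Set.ncard_sdiff' (fun d hd => hd.1) (Finsupp.finite_of_degree_eq n)]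
  congr 1
  ext d
  simp only [Set.mem_sdiff, Set.mem_ofPred_eq, not_and, not_exists]
  tauto

noncomputable def finTwoExponent : ℕ × ℕ ≃o (Fin 2 →₀ ℕ) :=
  (Finsupp.orderIsoFunOnFinite.trans (OrderIso.finTwoArrowIso ℕ)).symm

@[simp] theorem finTwoExponent_apply_zero (q : ℕ × ℕ) : finTwoExponent q 0 = q.1 := rfl

@[simp] theorem finTwoExponent_apply_one (q : ℕ × ℕ) : finTwoExponent q 1 = q.2 := rfl

theorem degree_finTwoExponent (q : ℕ × ℕ) : (finTwoExponent q).degree = q.1 + q.2 := by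
  simp [Finsupp.degree_eq_sum]

theorem monomial_finTwoExponent (k : Type*) [CommSemiring k] (q : ℕ × ℕ) :
    monomial (finTwoExponent q) (1 : k) = X 0 ^ q.1 * X 1 ^ q.2 := by
  have : finTwoExponent q = Finsupp.single 0 q.1 + Finsupp.single 1 q.2 := by
    ext i; fin_cases i <;> simp
  rw [this, X_pow_eq_monomial, X_pow_eq_monomial, monomial_mul, one_mul]

theorem hilbFn_span_X_pow_mul_X_pow (k : Type*) [Field k] (G : Finset (ℕ × ℕ)) (n : ℕ) :
    hilbFn k (Ideal.span ((fun g : ℕ × ℕ => X 0 ^ g.1 * X 1 ^ g.2) '' G)) n =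
      #{q ∈ antidiagonal n | ∀ g ∈ G, ¬(g.1 ≤ q.1 ∧ g.2 ≤ q.2)} := by
  have hG : (fun g : ℕ × ℕ => (X 0 ^ g.1 * X 1 ^ g.2 : MvPolynomial (Fin 2) k)) '' G =
      (monomial · 1) '' (finTwoExponent '' G) := by
    simp only [Set.image_image, monomial_finTwoExponent]
  rw [hG, hilbFn_span_monomial, ← Set.ncard_coe_finset,
    ← Set.ncard_preimage_of_injective_subset_range finTwoExponent.injective
      (by simp [finTwoExponent.surjective.range_eq])]
  congr 1
  ext q
  simp only [Set.mem_preimage, Set.mem_ofPred_eq, degree_finTwoExponent, Set.forall_mem_image,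
    OrderIso.le_iff_le, Prod.le_def, coe_filter, HasAntidiagonal.mem_antidiagonal, mem_coe]

theorem case_2b2_ideal_general
    (k : Type*) [Field k] (p : k) (hp1 : p ^ 2 ≠ 1) :
    ((X 0 : MvPolynomial (Fin 2) k) ^ 7 ∈
        Ideal.span ({X 0 ^ 3 * X 1 - C p * X 0 ^ 5, X 1 ^ 2 - X 0 ^ 4} :
          Set (MvPolynomial (Fin 2) k))) ∧
      hilbFn k (Ideal.span {X 0 ^ 3 * X 1, X 1 ^ 2, X 0 ^ 7}) 0 = 1 ∧
      hilbFn k (Ideal.span {X 0 ^ 3 * X 1, X 1 ^ 2, X 0 ^ 7}) 1 = 2 ∧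
      hilbFn k (Ideal.span {X 0 ^ 3 * X 1, X 1 ^ 2, X 0 ^ 7}) 2 = 2 ∧
      hilbFn k (Ideal.span {X 0 ^ 3 * X 1, X 1 ^ 2, X 0 ^ 7}) 3 = 2 ∧
      hilbFn k (Ideal.span {X 0 ^ 3 * X 1, X 1 ^ 2, X 0 ^ 7}) 4 = 1 ∧
      hilbFn k (Ideal.span {X 0 ^ 3 * X 1, X 1 ^ 2, X 0 ^ 7}) 5 = 1 ∧
      hilbFn k (Ideal.span {X 0 ^ 3 * X 1, X 1 ^ 2, X 0 ^ 7}) 6 = 1 ∧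
      (∀ j, 7 ≤ j → hilbFn k (Ideal.span {X 0 ^ 3 * X 1, X 1 ^ 2, X 0 ^ 7}) j = 0) := by
  have hI : (Ideal.span {X 0 ^ 3 * X 1, X 1 ^ 2, X 0 ^ 7} : Ideal (MvPolynomial (Fin 2) k)) =
      Ideal.span ((fun g : ℕ × ℕ => X 0 ^ g.1 * X 1 ^ g.2) ''
        ↑({(3, 1), (0, 2), (7, 0)} : Finset (ℕ × ℕ))) := by
    simp [Set.image_insert_eq]
  have hunit : IsUnit (1 - C p ^ 2 : MvPolynomial (Fin 2) k) := by
    simpa using (sub_ne_zero.2 hp1.symm).isUnit.map C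
  simp only [hI, hilbFn_span_X_pow_mul_X_pow]
  refine ⟨pow_seven_mem_span_pair hunit,
    by decide, by decide, by decide, by decide, by decide, by decide, by decide, fun j hj => ?_⟩
  rw [card_eq_zero, filter_eq_empty_iff]
  intro q hq
  simp only [HasAntidiagonal.mem_antidiagonal] at hq
  simp only [mem_insert, mem_singleton, forall_eq_or_imp, forall_eq, not_and, not_le]
  omega

/-- Let `k` be a field and `p ∈ k` with `p ≠ 0`, `p² ≠ 1`.
In `S = k[X,Y]` the ideal `J = (X³Y − pX⁵, Y² − X⁴)` contains `X⁷`, and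
`S/(X³Y, Y², X⁷)` has Hilbert function `1, 2, 2, 2, 1, 1, 1, 0, 0, …`. -/
theorem case_2b2_ideal
    (k : Type*) [Field k] (p : k) (hp : p ≠ 0) (hp1 : p ^ 2 ≠ 1) :
    ((X 0 : MvPolynomial (Fin 2) k) ^ 7 ∈
        Ideal.span ({X 0 ^ 3 * X 1 - C p * X 0 ^ 5, X 1 ^ 2 - X 0 ^ 4} :
          Set (MvPolynomial (Fin 2) k))) ∧
      hilbFn k (Ideal.span {X 0 ^ 3 * X 1, X 1 ^ 2, X 0 ^ 7}) 0 = 1 ∧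
      hilbFn k (Ideal.span {X 0 ^ 3 * X 1, X 1 ^ 2, X 0 ^ 7}) 1 = 2 ∧
      hilbFn k (Ideal.span {X 0 ^ 3 * X 1, X 1 ^ 2, X 0 ^ 7}) 2 = 2 ∧
      hilbFn k (Ideal.span {X 0 ^ 3 * X 1, X 1 ^ 2, X 0 ^ 7}) 3 = 2 ∧
      hilbFn k (Ideal.span {X 0 ^ 3 * X 1, X 1 ^ 2, X 0 ^ 7}) 4 = 1 ∧
      hilbFn k (Ideal.span {X 0 ^ 3 * X 1, X 1 ^ 2, X 0 ^ 7}) 5 = 1 ∧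
      hilbFn k (Ideal.span {X 0 ^ 3 * X 1, X 1 ^ 2, X 0 ^ 7}) 6 = 1 ∧
      (∀ j, 7 ≤ j → hilbFn k (Ideal.span {X 0 ^ 3 * X 1, X 1 ^ 2, X 0 ^ 7}) j = 0) :=
  case_2b2_ideal_general k p hp1
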